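/- arXiv:1702.05661 — 2 statements merged into one kernel-verified Lean document; each statement's English description precedes it below -/
import Mathlib

section
/- Let n ≥ 1, let w : Fin n → ℕ be a weight function with w(i) > 0 for all i, and let I be an ideal of R = ℂ[x₁,…,xₙ] generated by w-weighted-homogeneous polynomials. Let T = ℂ[[x₁,…,xₙ]], φ : R → T the canonical inclusion, and K the ideal of T generated by φ(I). Then the quotient ring R/I is reduced (has no nonzero nilpotent elements) if and only if the quotient ring T/K is reduced. -/
/-!
Say that `F ∈ T` lies in the weighted closure of `I` if for every `e` some `q ∈ I` has `F - q` of
weighted order at least `e`. Every element of `K = I·T` does, and since `I` is homogeneous, the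
weight-`e` component of such an `F` is that of some `q ∈ I`, hence a polynomial in `I`.
Conversely, writing these components as `∑ⱼ c_{e,j} fⱼ` over finitely many homogeneous
generators `fⱼ` and regrouping coefficients by weight gives `F = ∑ⱼ Aⱼ fⱼ ∈ K`. So `K` is the
weighted closure of `I`, and in particular `K ∩ R = I`, so `R/I ↪ T/K`.

If `R/I` is reduced and `F ^ k ∈ K`, approximations of `F` are built inductively: if `G = F - q`
has weighted order at least `e`, the weight-`k e` component of `G ^ k ∈ K` is `Gₑ ^ k`, which
therefore lies in `I`; so `Gₑ ∈ I`, and `q + Gₑ` approximates `F` to order `e + 1`.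
-/

open MvPolynomial

attribute [local instance] MvPolynomial.weightedGradedAlgebra

namespace MvPolynomial

variable {σ R : Type*} [CommRing R] {w : σ → ℕ}

theorem coe_weightedHomogeneousComponent (p : MvPolynomial σ R) (e : ℕ) :
    (weightedHomogeneousComponent w e p : MvPowerSeries σ R) =
      (p : MvPowerSeries σ R).weightedHomogeneousComponent w e := by
  ext m
  rw [coeff_coe, coeff_weightedHomogeneousComponent,
    MvPowerSeries.coeff_weightedHomogeneousComponent, coeff_coe]

end MvPolynomial

namespace MvPowerSeries

variable {σ R : Type*} [CommRing R] {w : σ → ℕ}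

theorem exists_le_weightedOrder_sub_coe [Finite σ] (hw : ∀ i, w i ≠ 0)
    (F : MvPowerSeries σ R) (e : ℕ) :
    ∃ p : MvPolynomial σ R, (e : ℕ∞) ≤ (F - p).weightedOrder w := by
  refine ⟨truncFinset R (Finsupp.finite_of_nat_weight_lt w hw e).toFinset F, ?_⟩
  refine nat_le_weightedOrder w fun d hd => ?_
  rw [map_sub, MvPolynomial.coeff_coe, coeff_truncFinset_of_mem _ (by simpa using hd), sub_self]

theorem weightedHomogeneousComponent_eq_of_lt_weightedOrder_sub {F G : MvPowerSeries σ R}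
    {e : ℕ} (h : (e : ℕ∞) < (F - G).weightedOrder w) :
    F.weightedHomogeneousComponent w e = G.weightedHomogeneousComponent w e := by
  rw [← sub_eq_zero, ← map_sub]
  exact weightedHomogeneousComponent_of_lt_weightedOrder_eq_zero h

theorem lt_weightedOrder_sub_weightedHomogeneousComponent {G : MvPowerSeries σ R} {e : ℕ}
    (hG : (e : ℕ∞) ≤ G.weightedOrder w) :
    (e : ℕ∞) < (G - G.weightedHomogeneousComponent w e).weightedOrder w := by
  rw [← ENat.add_one_le_iff (ENat.natCast_ne_top e)]
  refine mod_cast nat_le_weightedOrder (n := e + 1) w fun d hd => ?_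
  rw [map_sub, coeff_weightedHomogeneousComponent]
  split_ifs with hde
  · exact sub_self _
  · have hd' : (Finsupp.weight w d : ℕ∞) < e := mod_cast (by omega)
    rw [coeff_eq_zero_of_lt_weightedOrder w (lt_of_lt_of_le hd' hG), sub_zero]

theorem weightedHomogeneousComponent_zero_one :
    (1 : MvPowerSeries σ R).weightedHomogeneousComponent w 0 = 1 := by
  classical
  ext m
  rw [coeff_weightedHomogeneousComponent, coeff_one]
  split_ifs with h1 h2 <;> simp_all

theorem weightedHomogeneousComponent_pow_of_le_weightedOrder {G : MvPowerSeries σ R} {e : ℕ}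
    (hG : (e : ℕ∞) ≤ G.weightedOrder w) (k : ℕ) :
    (G ^ k).weightedHomogeneousComponent w (k * e) = G.weightedHomogeneousComponent w e ^ k := by
  induction k with
  | zero => simpa using weightedHomogeneousComponent_zero_one
  | succ k ih =>
    have hGk : ((k * e : ℕ) : ℕ∞) ≤ (G ^ k).weightedOrder w := by
      grw [← le_weightedOrder_pow, ← hG]
      simp
    rw [pow_succ, pow_succ, add_one_mul,
      weightedHomogeneousComponent_mul_of_le_weightedOrder hGk hG, ih]

theorem exists_coe_eq_weightedHomogeneousComponent [Finite σ]
    (hw : ∀ i, w i ≠ 0) (F : MvPowerSeries σ R) (e : ℕ) :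
    ∃ p : MvPolynomial σ R, (p : MvPowerSeries σ R) = F.weightedHomogeneousComponent w e := by
  obtain ⟨p, hp⟩ := exists_le_weightedOrder_sub_coe hw F (e + 1)
  refine ⟨MvPolynomial.weightedHomogeneousComponent w e p, ?_⟩
  rw [coe_weightedHomogeneousComponent,
    weightedHomogeneousComponent_eq_of_lt_weightedOrder_sub
      (lt_of_lt_of_le (mod_cast e.lt_succ_self) hp)]

end MvPowerSeries

namespace MvPolynomial

variable {σ R : Type*} [CommRing R] {w : σ → ℕ}

theorem isHomogeneous_span_of_isWeightedHomogeneous {S : Set (MvPolynomial σ R)}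
    (hS : ∀ f ∈ S, ∃ d, IsWeightedHomogeneous w f d) :
    (Ideal.span S).IsHomogeneous (weightedHomogeneousSubmodule R w) :=
  Ideal.homogeneous_span _ S fun f hf =>
    (hS f hf).imp fun d hd => (mem_weightedHomogeneousSubmodule R w d f).mpr hd

variable (w) in
def weightedClosure (I : Ideal (MvPolynomial σ R)) : Set (MvPowerSeries σ R) :=
  {F | ∀ e : ℕ, ∃ q ∈ I, (e : ℕ∞) ≤ (F - q).weightedOrder w}

theorem mem_weightedClosure_of_mem_map [Finite σ] (hw : ∀ i, w i ≠ 0)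
    {I : Ideal (MvPolynomial σ R)} {F : MvPowerSeries σ R}
    (hF : F ∈ I.map coeToMvPowerSeries.ringHom) : F ∈ weightedClosure w I := by
  rw [Ideal.map, Ideal.span] at hF
  induction hF using Submodule.span_induction with
  | mem F hF =>
    obtain ⟨p, hp, rfl⟩ := hF
    exact fun e => ⟨p, hp, by simp⟩
  | zero => exact fun e => ⟨0, I.zero_mem, by simp⟩
  | add F G _ _ hF hG =>
    intro e
    obtain ⟨p, hpI, hp⟩ := hF e
    obtain ⟨q, hqI, hq⟩ := hG e
    refine ⟨p + q, I.add_mem hpI hqI, ?_⟩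
    rw [coe_add, add_sub_add_comm]
    exact le_trans (le_min hp hq) (MvPowerSeries.min_weightedOrder_le_add w)
  | smul A G _ hG =>
    intro e
    obtain ⟨a, ha⟩ := MvPowerSeries.exists_le_weightedOrder_sub_coe hw A e
    obtain ⟨q, hqI, hq⟩ := hG e
    refine ⟨a * q, I.mul_mem_left a hqI, ?_⟩
    have hsplit : A • G - ↑(a * q) = A * (G - q) + (A - a) * q := by
      rw [smul_eq_mul, coe_mul]; ring
    rw [hsplit]
    refine le_trans (le_min ?_ ?_) (MvPowerSeries.min_weightedOrder_le_add w)
    · grw [← MvPowerSeries.le_weightedOrder_mul, ← hq]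
      exact le_add_self
    · grw [← MvPowerSeries.le_weightedOrder_mul, ← ha]
      exact le_self_add

theorem exists_coe_eq_weightedHomogeneousComponent_of_mem_weightedClosure
    {I : Ideal (MvPolynomial σ R)} (hI : I.IsHomogeneous (weightedHomogeneousSubmodule R w))
    {F : MvPowerSeries σ R} (hF : F ∈ weightedClosure w I) (e : ℕ) :
    ∃ p ∈ I, (p : MvPowerSeries σ R) = F.weightedHomogeneousComponent w e := by
  obtain ⟨q, hqI, hq⟩ := hF (e + 1)
  refine ⟨weightedHomogeneousComponent w e q,
    weightedHomogeneousComponent_mem_of_mem R w hI hqI e, ?_⟩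
  rw [coe_weightedHomogeneousComponent,
    MvPowerSeries.weightedHomogeneousComponent_eq_of_lt_weightedOrder_sub
      (lt_of_lt_of_le (mod_cast e.lt_succ_self) hq)]

theorem comap_map_coe_of_isHomogeneous [Finite σ] (hw : ∀ i, w i ≠ 0)
    {I : Ideal (MvPolynomial σ R)} (hI : I.IsHomogeneous (weightedHomogeneousSubmodule R w)) :
    (I.map coeToMvPowerSeries.ringHom).comap coeToMvPowerSeries.ringHom = I := by
  refine le_antisymm (fun p hp => ?_) Ideal.le_comap_map
  rw [mem_iff_weightedHomogeneousComponent_mem R w hI]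
  intro e
  obtain ⟨q, hqI, hq⟩ := exists_coe_eq_weightedHomogeneousComponent_of_mem_weightedClosure hI
    (mem_weightedClosure_of_mem_map hw hp) e
  rw [coeToMvPowerSeries.ringHom_apply, ← coe_weightedHomogeneousComponent] at hq
  exact coe_injective _ _ hq ▸ hqI

theorem mem_map_span_range_of_coe_eq_weightedHomogeneousComponent {ι : Type*} [Fintype ι]
    {f : ι → MvPolynomial σ R} {d : ι → ℕ} (hf : ∀ j, IsWeightedHomogeneous w (f j) (d j))
    {F : MvPowerSeries σ R}
    (hF : ∀ e, ∃ p ∈ Ideal.span (Set.range f),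
      (p : MvPowerSeries σ R) = F.weightedHomogeneousComponent w e) :
    F ∈ (Ideal.span (Set.range f)).map coeToMvPowerSeries.ringHom := by
  classical
  choose p hpI hpF using hF
  choose c hc using fun e => Ideal.mem_span_range_iff_exists_fun.mp (hpI e)
  let A : ι → MvPowerSeries σ R := fun j m => coeff m (c (Finsupp.weight w m + d j) j)
  have hFA : F = ∑ j, A j * f j := by
    ext m
    have hFm : MvPowerSeries.coeff m F = coeff m (p (Finsupp.weight w m)) := by
      rw [← coeff_coe, hpF, MvPowerSeries.coeff_weightedHomogeneousComponent, if_pos rfl]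
    rw [hFm, ← hc, map_sum, coeff_sum]
    refine Finset.sum_congr rfl fun j _ => ?_
    rw [coeff_mul, MvPowerSeries.coeff_mul]
    refine Finset.sum_congr rfl fun x hx => ?_
    rw [coeff_coe]
    by_cases hx2 : coeff x.2 (f j) = 0
    · rw [hx2, mul_zero, mul_zero]
    · have hweight : Finsupp.weight w x.1 + d j = Finsupp.weight w m := by
        rw [← hf j hx2, ← map_add, Finset.HasAntidiagonal.mem_antidiagonal.mp hx]
      change _ = coeff x.1 (c (Finsupp.weight w x.1 + d j) j) * _
      rw [hweight]
  rw [hFA]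
  exact Ideal.sum_mem _ fun j _ =>
    Ideal.mul_mem_left _ _ (Ideal.mem_map_of_mem _ (Ideal.subset_span ⟨j, rfl⟩))

theorem mem_map_span_iff_mem_weightedClosure [Finite σ] [IsNoetherianRing R]
    (hw : ∀ i, w i ≠ 0) {S : Set (MvPolynomial σ R)}
    (hS : ∀ f ∈ S, ∃ d, IsWeightedHomogeneous w f d) {F : MvPowerSeries σ R} :
    F ∈ (Ideal.span S).map coeToMvPowerSeries.ringHom ↔ F ∈ weightedClosure w (Ideal.span S) := by
  refine ⟨mem_weightedClosure_of_mem_map hw, fun hF => ?_⟩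
  obtain ⟨t, htS, hspan⟩ := (Submodule.fg_span_iff_fg_span_finset_subset S).mp
    (IsNoetherian.noetherian (Ideal.span S))
  choose d hd using fun j : t => hS j (htS j.2)
  have hrange : Ideal.span S = Ideal.span (Set.range ((↑) : t → MvPolynomial σ R)) := by
    rw [Subtype.range_coe]
    exact hspan
  rw [hrange] at hF ⊢
  exact mem_map_span_range_of_coe_eq_weightedHomogeneousComponent hd
    (exists_coe_eq_weightedHomogeneousComponent_of_mem_weightedClosure
      (hrange ▸ isHomogeneous_span_of_isWeightedHomogeneous hS) hF)

theorem isRadical_map_span [Finite σ] [IsNoetherianRing R] (hw : ∀ i, w i ≠ 0)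
    {S : Set (MvPolynomial σ R)} (hS : ∀ f ∈ S, ∃ d, IsWeightedHomogeneous w f d)
    (hrad : (Ideal.span S).IsRadical) :
    ((Ideal.span S).map coeToMvPowerSeries.ringHom).IsRadical := by
  set I := Ideal.span S
  rintro F ⟨k, hk⟩
  rw [mem_map_span_iff_mem_weightedClosure hw hS]
  intro e
  induction e with
  | zero => exact ⟨0, I.zero_mem, by simp⟩
  | succ e ih =>
    obtain ⟨q, hqI, hq⟩ := ih
    set G := F - q
    have hGk : G ^ k ∈ I.map coeToMvPowerSeries.ringHom := by
      have hGF : G - F ∈ I.map coeToMvPowerSeries.ringHom := by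
        rw [sub_sub_cancel_left]
        exact neg_mem (Ideal.mem_map_of_mem _ hqI)
      simpa using add_mem (Ideal.mem_of_dvd _ (sub_dvd_pow_sub_pow G F k) hGF) hk
    obtain ⟨r, hrI, hr⟩ := exists_coe_eq_weightedHomogeneousComponent_of_mem_weightedClosure
      (isHomogeneous_span_of_isWeightedHomogeneous hS)
      (mem_weightedClosure_of_mem_map hw hGk) (k * e)
    obtain ⟨s, hs⟩ := MvPowerSeries.exists_coe_eq_weightedHomogeneousComponent hw G e
    have hsk : s ^ k = r := by
      apply coe_injective σ R
      rw [coe_pow, hs, hr, MvPowerSeries.weightedHomogeneousComponent_pow_of_le_weightedOrder hq]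
    have hsI : s ∈ I := hrad ⟨k, hsk ▸ hrI⟩
    refine ⟨q + s, I.add_mem hqI hsI, ?_⟩
    rw [coe_add, ← sub_sub, hs, Nat.cast_succ]
    exact (ENat.add_one_le_iff (ENat.natCast_ne_top e)).mpr
      (MvPowerSeries.lt_weightedOrder_sub_weightedHomogeneousComponent hq)

end MvPolynomial

theorem stmt6_general {n : ℕ} (w : Fin n → ℕ) (hw : ∀ i, 0 < w i)
    (S : Set (MvPolynomial (Fin n) ℂ))
    (hS : ∀ f ∈ S, ∃ d : ℕ, MvPolynomial.IsWeightedHomogeneous w f d)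
    (I : Ideal (MvPolynomial (Fin n) ℂ)) (hI : I = Ideal.span S)
    (φ : MvPolynomial (Fin n) ℂ →+* MvPowerSeries (Fin n) ℂ)
    (hφ : φ = MvPolynomial.coeToMvPowerSeries.ringHom)
    (K : Ideal (MvPowerSeries (Fin n) ℂ)) (hK : K = I.map φ) :
    IsReduced (MvPolynomial (Fin n) ℂ ⧸ I) ↔ IsReduced (MvPowerSeries (Fin n) ℂ ⧸ K) := by
  subst hI hφ hK
  have hw' : ∀ i, w i ≠ 0 := fun i => (hw i).ne'
  rw [← Ideal.isRadical_iff_quotient_reduced, ← Ideal.isRadical_iff_quotient_reduced]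
  refine ⟨isRadical_map_span hw' hS, fun hrad => ?_⟩
  rw [← comap_map_coe_of_isHomogeneous hw' (isHomogeneous_span_of_isWeightedHomogeneous hS)]
  exact hrad.comap _

/-- Let `n ≥ 1`, `w : Fin n → ℕ` a positive weight function, and `I` an
ideal of `R = ℂ[x₁,…,xₙ]` generated by `w`-weighted-homogeneous polynomials.  Let
`T = ℂ[[x₁,…,xₙ]]`, `φ : R → T` the canonical inclusion, and `K = I·T`.  Then `R/I` is
reduced if and only if `T/K` is reduced. -/
theorem stmt6 {n : ℕ} (hn : 1 ≤ n) (w : Fin n → ℕ) (hw : ∀ i, 0 < w i)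
    (S : Set (MvPolynomial (Fin n) ℂ))
    (hS : ∀ f ∈ S, ∃ d : ℕ, MvPolynomial.IsWeightedHomogeneous w f d)
    (I : Ideal (MvPolynomial (Fin n) ℂ)) (hI : I = Ideal.span S)
    (φ : MvPolynomial (Fin n) ℂ →+* MvPowerSeries (Fin n) ℂ)
    (hφ : φ = MvPolynomial.coeToMvPowerSeries.ringHom)
    (K : Ideal (MvPowerSeries (Fin n) ℂ)) (hK : K = I.map φ) :
    IsReduced (MvPolynomial (Fin n) ℂ ⧸ I) ↔ IsReduced (MvPowerSeries (Fin n) ℂ ⧸ K) :=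
  stmt6_general w hw S hS I hI φ hφ K hK
end

section
/- Let n ≥ 3 and g ≥ 1. Let L be the free complex Lie algebra on the 2g generators a₁, b₁, …, a_g, b_g, set r = Σ_{i=1}^{g} ⁅a_i, b_i⁆, let J' be the Lie ideal of L generated by the elements ⁅a_i, r⁆ and ⁅b_i, r⁆ (i = 1, …, g), and let J be the Lie ideal of L generated by r. Then J' ⊆ J, so the identity on generators induces a surjective Lie algebra homomorphism q : L/J' → L/J, and the precomposition map q* : Hom_Lie(L/J, 𝔰𝔩_n(ℂ)) → Hom_Lie(L/J', 𝔰𝔩_n(ℂ)), ψ ↦ ψ ∘ q, is NOT surjective. -/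
/-!
In `sl n ℂ` with `n ≥ 3` the elementary matrices `x = E₀₁`, `y = E₁₂` span a Heisenberg algebra:
`⁅x, y⁆ = E₀₂ ≠ 0` commutes with `x` and `y`. The representation of `L` sending `a₁ ↦ x`,
`b₁ ↦ y` and every other generator to `0` maps `r` to `⁅x, y⁆`, hence kills all `⁅aᵢ, r⁆` and
`⁅bᵢ, r⁆` but not `r`. It therefore descends to `L ⧸ J'` without factoring through `q`, since
`r ∈ J` is sent to `0` by anything of the form `ψ ∘ q`.
-/

open FreeLieAlgebra LieSubmodule

namespace LieIdeal

variable {R L M : Type*} [CommRing R] [LieRing L] [LieAlgebra R L] [LieRing M] [LieAlgebra R M]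

def liftQ (I : LieIdeal R L) (φ : L →ₗ⁅R⁆ M) (h : I ≤ φ.ker) : (L ⧸ I) →ₗ⁅R⁆ M :=
  { toLinearMap :=
      Submodule.liftQ (I : Submodule R L) φ.toLinearMap fun x hx => φ.mem_ker.mp (h hx)
    map_lie' := by
      rintro ⟨x⟩ ⟨y⟩
      exact φ.map_lie x y }

@[simp]
theorem liftQ_mk (I : LieIdeal R L) (φ : L →ₗ⁅R⁆ M) (h : I ≤ φ.ker) (x : L) :
    liftQ I φ h (LieSubmodule.Quotient.mk x) = φ x :=
  rfl

theorem not_surjective_comp_of_map_ne_zero {I J : LieIdeal R L} (q : (L ⧸ I) →ₗ⁅R⁆ (L ⧸ J))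
    (hq : ∀ x, q (LieSubmodule.Quotient.mk x) = LieSubmodule.Quotient.mk x) (φ : L →ₗ⁅R⁆ M)
    (hφ : I ≤ φ.ker) {r : L} (hr : r ∈ J) (hφr : φ r ≠ 0) :
    ¬ Function.Surjective fun ψ : (L ⧸ J) →ₗ⁅R⁆ M => ψ.comp q := by
  intro hsurj
  obtain ⟨ψ, hψ⟩ := hsurj (liftQ I φ hφ)
  apply hφr
  calc φ r = ψ (q (LieSubmodule.Quotient.mk r)) := by
        rw [← liftQ_mk I φ hφ, ← hψ, LieHom.comp_apply]
    _ = 0 := by rw [hq, Quotient.mk_eq_zero'.mpr hr, map_zero]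

end LieIdeal

namespace LieAlgebra.SpecialLinear

variable {R n : Type*} [CommRing R] [Fintype n] [DecidableEq n]

theorem lie_single_single {i j k : n} (hij : i ≠ j) (hjk : j ≠ k) (hik : i ≠ k) (a b : R) :
    ⁅single i j hij a, single j k hjk b⁆ = single i k hik (a * b) := by
  ext1
  rw [sl_bracket, val_single, val_single, val_single, Matrix.single_mul_single_same,
    Matrix.single_mul_single_of_ne (h := hik.symm), sub_zero]

theorem lie_single_single_of_ne {i j k l : n} (hij : i ≠ j) (hkl : k ≠ l) (hjk : j ≠ k)
    (hli : l ≠ i) (a b : R) : ⁅single i j hij a, single k l hkl b⁆ = 0 := by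
  ext1
  rw [sl_bracket, val_single, val_single, Matrix.single_mul_single_of_ne (h := hjk),
    Matrix.single_mul_single_of_ne (h := hli), sub_zero, ZeroMemClass.coe_zero]

theorem single_ne_zero {i j : n} (hij : i ≠ j) {a : R} (ha : a ≠ 0) : single i j hij a ≠ 0 := by
  intro h
  have := congrArg (fun A : sl n R => A.val i j) h
  simp only [val_single, Matrix.single_apply_same, ZeroMemClass.coe_zero,
    Matrix.zero_apply] at this
  exact ha this

theorem exists_lie_ne_zero_of_three_le_card [Nontrivial R] (hn : 3 ≤ Fintype.card n) :
    ∃ x y : sl n R, ⁅x, y⁆ ≠ 0 ∧ ⁅x, ⁅x, y⁆⁆ = 0 ∧ ⁅y, ⁅x, y⁆⁆ = 0 := by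
  obtain ⟨i, j, k, hij, hik, hjk⟩ := Fintype.two_lt_card_iff.mp hn
  refine ⟨single i j hij (1 : R), single j k hjk (1 : R), ?_⟩
  rw [lie_single_single hij hjk hik, one_mul]
  refine ⟨single_ne_zero hik one_ne_zero, ?_, ?_⟩
  · exact lie_single_single_of_ne hij hik hij.symm hik.symm _ _
  · exact lie_single_single_of_ne hjk hik hik.symm hjk.symm _ _

end LieAlgebra.SpecialLinear

noncomputable section

def surfaceRelator (R ι : Type*) [CommRing R] [Fintype ι] : FreeLieAlgebra R (ι ⊕ ι) :=
  ∑ i, ⁅of R (Sum.inl i : ι ⊕ ι), of R (Sum.inr i : ι ⊕ ι)⁆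

variable {R ι M : Type*} [CommRing R] [DecidableEq ι] [LieRing M] [LieAlgebra R M]

def singleHandleHom (i₀ : ι) (x y : M) : FreeLieAlgebra R (ι ⊕ ι) →ₗ⁅R⁆ M :=
  lift R (Sum.elim (Pi.single i₀ x) (Pi.single i₀ y))

variable (i₀ : ι) (x y : M)

theorem singleHandleHom_of_inl (i : ι) :
    singleHandleHom (R := R) i₀ x y (of R (Sum.inl i)) = (Pi.single i₀ x : ι → M) i :=
  lift_of_apply _ _

theorem singleHandleHom_of_inr (i : ι) :
    singleHandleHom (R := R) i₀ x y (of R (Sum.inr i)) = (Pi.single i₀ y : ι → M) i :=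
  lift_of_apply _ _

variable [Fintype ι]

theorem singleHandleHom_surfaceRelator :
    singleHandleHom i₀ x y (surfaceRelator R ι) = ⁅x, y⁆ := by
  simp only [surfaceRelator, map_sum, LieHom.map_lie, singleHandleHom_of_inl,
    singleHandleHom_of_inr]
  rw [Finset.sum_eq_single i₀ (fun i _ hi => by rw [Pi.single_eq_of_ne hi, zero_lie])
    (fun h => absurd (Finset.mem_univ i₀) h), Pi.single_eq_same, Pi.single_eq_same]

theorem lieSpan_le_ker_singleHandleHom (hx : ⁅x, ⁅x, y⁆⁆ = 0) (hy : ⁅y, ⁅x, y⁆⁆ = 0) :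
    lieSpan R (FreeLieAlgebra R (ι ⊕ ι))
      {z | ∃ i, z = ⁅of R (Sum.inl i : ι ⊕ ι), surfaceRelator R ι⁆ ∨
        z = ⁅of R (Sum.inr i : ι ⊕ ι), surfaceRelator R ι⁆} ≤ (singleHandleHom i₀ x y).ker := by
  rw [lieSpan_le]
  rintro z ⟨i, rfl | rfl⟩ <;>
    rw [SetLike.mem_coe, LieHom.mem_ker, LieHom.map_lie, singleHandleHom_surfaceRelator]
  · rw [singleHandleHom_of_inl, Pi.apply_single (fun _ v => ⁅v, ⁅x, y⁆⁆) (fun _ => zero_lie _),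
      hx, Pi.single_zero, Pi.zero_apply]
  · rw [singleHandleHom_of_inr, Pi.apply_single (fun _ v => ⁅v, ⁅x, y⁆⁆) (fun _ => zero_lie _),
      hy, Pi.single_zero, Pi.zero_apply]

end

/-- Let `n ≥ 3`, `g ≥ 1`, `L` the free complex Lie algebra on
`a₁, b₁, …, a_g, b_g`, `r = Σᵢ ⁅aᵢ, bᵢ⁆`, `J'` the Lie ideal generated by the elements
`⁅aᵢ, r⁆, ⁅bᵢ, r⁆`, and `J` the Lie ideal generated by `r`.  Then `J' ⊆ J`, and for the
Lie algebra map `q : L/J' → L/J` induced by the identity on generators (i.e. satisfying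
`q ∘ mk = mk`), the precomposition map `ψ ↦ ψ ∘ q` from `Hom_Lie(L/J, 𝔰𝔩ₙ(ℂ))` to
`Hom_Lie(L/J', 𝔰𝔩ₙ(ℂ))` is not surjective. -/
theorem stmt10 (n g : ℕ) (hn : 3 ≤ n) (hg : 1 ≤ g)
    (a b : Fin g → FreeLieAlgebra ℂ (Fin g ⊕ Fin g))
    (ha : ∀ i, a i = FreeLieAlgebra.of ℂ (Sum.inl i))
    (hb : ∀ i, b i = FreeLieAlgebra.of ℂ (Sum.inr i))
    (r : FreeLieAlgebra ℂ (Fin g ⊕ Fin g))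
    (hr : r = ∑ i : Fin g, ⁅a i, b i⁆)
    (J' J : LieIdeal ℂ (FreeLieAlgebra ℂ (Fin g ⊕ Fin g)))
    (hJ' : J' = LieSubmodule.lieSpan ℂ (FreeLieAlgebra ℂ (Fin g ⊕ Fin g))
      {x | ∃ i : Fin g, x = ⁅a i, r⁆ ∨ x = ⁅b i, r⁆})
    (hJ : J = LieSubmodule.lieSpan ℂ (FreeLieAlgebra ℂ (Fin g ⊕ Fin g)) {r}) :
    J' ≤ J ∧
    ∀ q : (FreeLieAlgebra ℂ (Fin g ⊕ Fin g) ⧸ J') →ₗ⁅ℂ⁆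
        (FreeLieAlgebra ℂ (Fin g ⊕ Fin g) ⧸ J),
      (∀ x : FreeLieAlgebra ℂ (Fin g ⊕ Fin g),
        q (LieSubmodule.Quotient.mk (N := J') x) = LieSubmodule.Quotient.mk (N := J) x) →
      ¬ Function.Surjective
        (fun ψ : (FreeLieAlgebra ℂ (Fin g ⊕ Fin g) ⧸ J) →ₗ⁅ℂ⁆
            LieAlgebra.SpecialLinear.sl (Fin n) ℂ => ψ.comp q) := by
  obtain rfl : a = fun i => of ℂ (Sum.inl i) := funext ha
  obtain rfl : b = fun i => of ℂ (Sum.inr i) := funext hb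
  obtain rfl : r = surfaceRelator ℂ (Fin g) := hr
  subst hJ' hJ
  have hrJ : surfaceRelator ℂ (Fin g) ∈
      lieSpan ℂ (FreeLieAlgebra ℂ (Fin g ⊕ Fin g)) {surfaceRelator ℂ (Fin g)} :=
    subset_lieSpan rfl
  refine ⟨lieSpan_le.mpr ?_, fun q hq => ?_⟩
  · rintro z ⟨i, rfl | rfl⟩ <;> exact lie_mem _ hrJ
  obtain ⟨x, y, hxy, hx, hy⟩ := LieAlgebra.SpecialLinear.exists_lie_ne_zero_of_three_le_card
    (R := ℂ) (n := Fin n) (by rwa [Fintype.card_fin])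
  exact LieIdeal.not_surjective_comp_of_map_ne_zero q hq (singleHandleHom ⟨0, hg⟩ x y)
    (lieSpan_le_ker_singleHandleHom _ x y hx hy) hrJ (by rwa [singleHandleHom_surfaceRelator])
end
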